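/- arXiv:2008.04229 — 11 statements merged into one kernel-verified Lean document; each statement's English description precedes it below -/
import Mathlib

section
/- A random non-forced choice model ρ on X satisfies axioms A1, A2 and A3 if and only if ρ is a decision-conflict logit, i.e. there exist a strictly positive function u : X → ℝ and a nonnegative function D on menus with D(A) = 0 if and only if |A| = 1, such that ρ(a,A) = u(a)/(∑_{b∈A} u(b) + D(A)) for every menu A and every a ∈ A. -/
open Finset

variable {X : Type*} [Fintype X] [DecidableEq X]

/-- The probability of choosing the outside option (deferring) at menu `A`. -/
noncomputable def defer (ρ : Finset X → X → ℝ) (A : Finset X) : ℝ :=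
  1 - ∑ a ∈ A, ρ A a

/-- `ρ` is a random non-forced choice model on `X`. -/
def IsRNFC (ρ : Finset X → X → ℝ) : Prop :=
  ∀ A : Finset X, A.Nonempty →
    (∀ a ∈ A, 0 ≤ ρ A a ∧ ρ A a ≤ 1) ∧
    (∀ a, a ∉ A → ρ A a = 0) ∧
    (∑ a ∈ A, ρ A a) ≤ 1

/-- Axiom A1 (Desirability). -/
def A1 (ρ : Finset X → X → ℝ) : Prop := ∀ a : X, ρ {a} a = 1

/-- Axiom A2 (Positivity). -/
def A2 (ρ : Finset X → X → ℝ) : Prop :=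
  ∀ A : Finset X, 2 ≤ A.card → (∀ a ∈ A, 0 < ρ A a) ∧ 0 < defer ρ A

/-- Axiom A3 (The Active-Choice Luce Axiom). -/
def A3 (ρ : Finset X → X → ℝ) : Prop :=
  ∀ A B : Finset X, A.Nonempty → B.Nonempty →
    ∀ a ∈ A ∩ B, ∀ b ∈ A ∩ B, ρ A a * ρ B b = ρ B a * ρ A b

/-- `ρ` is a decision-conflict logit with representation `(u, D)`. -/
def IsDCL (ρ : Finset X → X → ℝ) (u : X → ℝ) (D : Finset X → ℝ) : Prop :=
  (∀ a, 0 < u a) ∧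
  (∀ A : Finset X, A.Nonempty → 0 ≤ D A ∧ (D A = 0 ↔ A.card = 1)) ∧
  (∀ A : Finset X, A.Nonempty → ∀ a ∈ A, ρ A a = u a / ((∑ b ∈ A, u b) + D A))

/-!
Take as utility `u` the choice probabilities from the grand menu `X`. Axiom A3 with `B = X`
makes the choice probabilities on any menu `A` proportional to `u`, with factor
`(∑ b ∈ A, ρ A b) / ∑ b ∈ A, u b`; the decision conflict `D A` is then the deferral probability
`defer ρ A` rescaled by the inverse factor, and A1 and A2 make it vanish exactly on singletons.
-/

theorem Finset.eq_mul_sum_div_sum_of_proportional {ι : Type*} {s : Finset ι} {p u : ι → ℝ}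
    (hu : ∀ i ∈ s, 0 < u i) (hprop : ∀ i ∈ s, ∀ j ∈ s, p i * u j = u i * p j)
    {i : ι} (hi : i ∈ s) : p i = u i * (∑ j ∈ s, p j) / ∑ j ∈ s, u j := by
  have hsum : 0 < ∑ j ∈ s, u j := sum_pos hu ⟨i, hi⟩
  rw [eq_div_iff hsum.ne', mul_sum, mul_sum]
  exact sum_congr rfl fun j hj => hprop i hi j hj

section

omit [Fintype X] [DecidableEq X]

variable {ρ : Finset X → X → ℝ}

namespace IsDCL

variable {u : X → ℝ} {D : Finset X → ℝ}

lemma sum_add_pos (h : IsDCL ρ u D) {A : Finset X} (hA : A.Nonempty) :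
    0 < (∑ b ∈ A, u b) + D A :=
  add_pos_of_pos_of_nonneg (sum_pos (fun b _ => h.1 b) hA) (h.2.1 A hA).1

lemma conflict_pos (h : IsDCL ρ u D) {A : Finset X} (hA : 2 ≤ A.card) : 0 < D A := by
  have hA' : A.Nonempty := card_pos.mp (by omega)
  refine (h.2.1 A hA').1.lt_of_ne fun h0 => ?_
  have := (h.2.1 A hA').2.mp h0.symm
  omega

lemma defer_eq (h : IsDCL ρ u D) {A : Finset X} (hA : A.Nonempty) :
    defer ρ A = D A / ((∑ b ∈ A, u b) + D A) := by
  have hden := (h.sum_add_pos hA).ne'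
  rw [defer, sum_congr rfl (h.2.2 A hA), ← sum_div]
  field_simp
  ring

lemma a1 (h : IsDCL ρ u D) : A1 ρ := by
  intro a
  have hD0 : D {a} = 0 := (h.2.1 {a} (singleton_nonempty a)).2.mpr (card_singleton a)
  rw [h.2.2 {a} (singleton_nonempty a) a (mem_singleton_self a), hD0, sum_singleton, add_zero,
    div_self (h.1 a).ne']

lemma a2 (h : IsDCL ρ u D) : A2 ρ := by
  intro A hA
  have hA' : A.Nonempty := card_pos.mp (by omega)
  refine ⟨fun a ha => ?_, ?_⟩
  · rw [h.2.2 A hA' a ha]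
    exact div_pos (h.1 a) (h.sum_add_pos hA')
  · rw [h.defer_eq hA']
    exact div_pos (h.conflict_pos hA) (h.sum_add_pos hA')

end IsDCL

lemma defer_singleton_of_A1 (h1 : A1 ρ) (a : X) : defer ρ {a} = 0 := by
  rw [defer, sum_singleton, h1 a, sub_self]

lemma pos_of_mem_of_A1_A2 (h1 : A1 ρ) (h2 : A2 ρ) {A : Finset X} {a : X} (ha : a ∈ A) :
    0 < ρ A a := by
  obtain rfl | hA := eq_singleton_or_nontrivial ha
  · rw [h1 a]
    exact one_pos
  · exact (h2 A (one_lt_card_iff_nontrivial.mpr hA)).1 a ha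

lemma defer_nonneg_of_A1_A2 (h1 : A1 ρ) (h2 : A2 ρ) {A : Finset X} (hA : A.Nonempty) :
    0 ≤ defer ρ A := by
  obtain ⟨a, rfl⟩ | hA := hA.exists_eq_singleton_or_nontrivial
  · exact (defer_singleton_of_A1 h1 a).ge
  · exact (h2 A (one_lt_card_iff_nontrivial.mpr hA)).2.le

lemma defer_eq_zero_iff_of_A1_A2 (h1 : A1 ρ) (h2 : A2 ρ) {A : Finset X} (hA : A.Nonempty) :
    defer ρ A = 0 ↔ A.card = 1 := by
  obtain ⟨a, rfl⟩ | hA := hA.exists_eq_singleton_or_nontrivial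
  · simp only [defer_singleton_of_A1 h1 a, card_singleton]
  · have hcard := one_lt_card_iff_nontrivial.mpr hA
    exact iff_of_false (h2 A hcard).2.ne' (by omega)

noncomputable def decisionConflict (ρ : Finset X → X → ℝ) (u : X → ℝ) (A : Finset X) : ℝ :=
  (∑ b ∈ A, u b) * defer ρ A / ∑ b ∈ A, ρ A b

lemma sum_add_decisionConflict (u : X → ℝ) {A : Finset X} (hρA : 0 < ∑ b ∈ A, ρ A b) :
    (∑ b ∈ A, u b) + decisionConflict ρ u A = (∑ b ∈ A, u b) / ∑ b ∈ A, ρ A b := by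
  rw [decisionConflict, defer]
  field_simp
  ring

end

omit [Fintype X] in
lemma IsDCL.a3 {ρ : Finset X → X → ℝ} {u : X → ℝ} {D : Finset X → ℝ} (h : IsDCL ρ u D) :
    A3 ρ := by
  intro A B hA hB a ha b hb
  rw [mem_inter] at ha hb
  rw [h.2.2 A hA a ha.1, h.2.2 B hB b hb.2, h.2.2 B hB a ha.2, h.2.2 A hA b hb.1]
  ring

lemma isDCL_of_A1_A2_A3 {ρ : Finset X → X → ℝ} (h1 : A1 ρ) (h2 : A2 ρ) (h3 : A3 ρ) :
    IsDCL ρ (ρ univ) (decisionConflict ρ (ρ univ)) := by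
  have hu : ∀ a, 0 < ρ univ a := fun a => pos_of_mem_of_A1_A2 h1 h2 (mem_univ a)
  have hρA : ∀ A : Finset X, A.Nonempty → 0 < ∑ b ∈ A, ρ A b := fun A hA =>
    sum_pos (fun b hb => pos_of_mem_of_A1_A2 h1 h2 hb) hA
  refine ⟨hu, fun A hA => ⟨?_, ?_⟩, fun A hA a ha => ?_⟩
  · exact div_nonneg (mul_nonneg (sum_pos (fun b _ => hu b) hA).le
      (defer_nonneg_of_A1_A2 h1 h2 hA)) (hρA A hA).le
  · rw [decisionConflict, div_eq_zero_iff, mul_eq_zero,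
      or_iff_right (sum_pos (fun b _ => hu b) hA).ne', or_iff_left (hρA A hA).ne']
    exact defer_eq_zero_iff_of_A1_A2 h1 h2 hA
  · have hprop : ∀ a ∈ A, ∀ b ∈ A, ρ A a * ρ univ b = ρ univ a * ρ A b := fun a ha b hb =>
      h3 A univ hA ⟨a, mem_univ a⟩ a (by simpa using ha) b (by simpa using hb)
    rw [sum_add_decisionConflict _ (hρA A hA), div_div_eq_mul_div]
    exact eq_mul_sum_div_sum_of_proportional (fun b _ => hu b) hprop ha

theorem stmt0_general (ρ : Finset X → X → ℝ) :
    (A1 ρ ∧ A2 ρ ∧ A3 ρ) ↔ ∃ u D, IsDCL ρ u D :=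
  ⟨fun ⟨h1, h2, h3⟩ => ⟨_, _, isDCL_of_A1_A2_A3 h1 h2 h3⟩,
    fun ⟨_, _, h⟩ => ⟨h.a1, h.a2, h.a3⟩⟩

theorem stmt0 (hX : 1 < Fintype.card X) (ρ : Finset X → X → ℝ) (hρ : IsRNFC ρ) :
    (A1 ρ ∧ A2 ρ ∧ A3 ρ) ↔ ∃ u D, IsDCL ρ u D :=
  stmt0_general ρ
end

section
/- Two decision-conflict logit representations (u,D) and (u',D') induce the same random non-forced choice model ρ if and only if there exists α > 0 such that u = α·u' and D = α·D'. -/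
open Finset

variable {X : Type*} [Fintype X] [DecidableEq X]

/-- Two decision-conflict logit representations induce the same random non-forced choice
model iff they are common positive linear transformations of each other. -/
theorem stmt1 (hX : 1 < Fintype.card X)
    (u u' : X → ℝ) (D D' : Finset X → ℝ)
    (hu : ∀ a, 0 < u a) (hu' : ∀ a, 0 < u' a)
    (hD : ∀ A : Finset X, A.Nonempty → 0 ≤ D A ∧ (D A = 0 ↔ A.card = 1))
    (hD' : ∀ A : Finset X, A.Nonempty → 0 ≤ D' A ∧ (D' A = 0 ↔ A.card = 1)) :
    (∀ A : Finset X, A.Nonempty → ∀ a ∈ A,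
        u a / ((∑ b ∈ A, u b) + D A) = u' a / ((∑ b ∈ A, u' b) + D' A))
      ↔ ∃ α > 0, (∀ a, u a = α * u' a) ∧
          ∀ A : Finset X, A.Nonempty → D A = α * D' A := by
  have sumpos : ∀ (v : X → ℝ), (∀ a, 0 < v a) → ∀ A : Finset X, A.Nonempty →
      0 < ∑ b ∈ A, v b := fun v hv A hA =>
    Finset.sum_pos (fun b _ => hv b) hA
  have denpos : ∀ A : Finset X, A.Nonempty → 0 < (∑ b ∈ A, u b) + D A := by
    intro A hA
    have := (hD A hA).1
    linarith [sumpos u hu A hA]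
  have denpos' : ∀ A : Finset X, A.Nonempty → 0 < (∑ b ∈ A, u' b) + D' A := by
    intro A hA
    have := (hD' A hA).1
    linarith [sumpos u' hu' A hA]
  constructor
  · intro h
    -- ratio lemma
    have ratio : ∀ a b : X, a ≠ b → u a * u' b = u' a * u b := by
      intro a b hab
      have hA : ({a, b} : Finset X).Nonempty := ⟨a, by simp⟩
      have ha := h {a, b} hA a (by simp)
      have hb := h {a, b} hA b (by simp)
      have hS := denpos {a, b} hA
      have hS' := denpos' {a, b} hA
      rw [div_eq_div_iff (ne_of_gt hS) (ne_of_gt hS')] at ha hb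
      set S := (∑ b_1 ∈ {a, b}, u b_1) + D {a, b} with hSdef
      set S' := (∑ b_1 ∈ {a, b}, u' b_1) + D' {a, b} with hS'def
      have key : (u a * u' b) * S' = (u' a * u b) * S' := by
        calc (u a * u' b) * S' = (u a * S') * u' b := by ring
          _ = (u' a * S) * u' b := by rw [ha]
          _ = u' a * (u' b * S) := by ring
          _ = u' a * (u b * S') := by rw [← hb]
          _ = (u' a * u b) * S' := by ring
      exact mul_right_cancel₀ hS'.ne' key
    obtain ⟨a₀, b₀, hab₀⟩ := Fintype.exists_pair_of_one_lt_card hX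
    set α := u a₀ / u' a₀ with hα
    have hαpos : 0 < α := div_pos (hu a₀) (hu' a₀)
    have hmain : ∀ a, u a = α * u' a := by
      intro a
      by_cases hcase : a = a₀
      · subst hcase
        rw [hα, div_mul_cancel₀ _ (hu' a).ne']
      · have := ratio a₀ a (fun e => hcase e.symm)
        rw [hα, div_mul_eq_mul_div, eq_div_iff (hu' a₀).ne']
        linarith [this]
    refine ⟨α, hαpos, hmain, ?_⟩
    intro A hA
    obtain ⟨a, ha⟩ := hA
    have heq := h A ⟨a, ha⟩ a ha
    have hS := denpos A ⟨a, ha⟩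
    have hS' := denpos' A ⟨a, ha⟩
    rw [div_eq_div_iff (ne_of_gt hS) (ne_of_gt hS')] at heq
    have hsum : (∑ b ∈ A, u b) = α * ∑ b ∈ A, u' b := by
      rw [Finset.mul_sum]; exact Finset.sum_congr rfl fun b _ => hmain b
    rw [hmain a, hsum] at heq
    have hu'a := (hu' a).ne'
    nlinarith [hu' a, heq]
  · rintro ⟨α, hαpos, hu_eq, hD_eq⟩
    intro A hA a ha
    have hsum : (∑ b ∈ A, u b) = α * ∑ b ∈ A, u' b := by
      rw [Finset.mul_sum]; exact Finset.sum_congr rfl fun b _ => hu_eq b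
    rw [hu_eq a, hsum, hD_eq A hA, ← mul_add, mul_div_mul_left _ _ (ne_of_gt hαpos)]
end

section
/- If a random non-forced choice model ρ on X satisfies axioms A2 and A3, then there exists a strictly positive function u : X → ℝ such that for every menu A and every a ∈ A, ρ(a,A) = (1 − ρ(o,A)) · u(a)/(∑_{b∈A} u(b)); moreover, one may take u(a) = ρ(a,X)/ρ(z,X) for any fixed z ∈ X. -/
open Finset

variable {X : Type*} [Fintype X] [DecidableEq X]

/-!
Applying the Luce axiom A3 to a menu `A` and to any larger menu `B` shows that the active-choice
probabilities `ρ(·, A)` are proportional on `A` to `ρ(·, B)`; their total is `1 - ρ(o, A)`. Taking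
`B = X`, positivity (A2) makes `ρ(·, X)` a strictly positive utility, and rescaling it by
`ρ(z, X)` changes nothing.
-/

omit [Fintype X] [DecidableEq X] in
theorem one_sub_defer (ρ : Finset X → X → ℝ) (A : Finset X) :
    1 - defer ρ A = ∑ a ∈ A, ρ A a :=
  sub_sub_cancel _ _

omit [DecidableEq X] in
theorem A2.pos_univ {ρ : Finset X → X → ℝ} (h2 : A2 ρ) (hX : 1 < Fintype.card X) (a : X) :
    0 < ρ univ a :=
  (h2 univ (by rwa [card_univ])).1 a (mem_univ a)

namespace A3

omit [Fintype X]

variable {ρ : Finset X → X → ℝ} {A B : Finset X} {a : X}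

theorem mul_sum_eq_sum_mul (h3 : A3 ρ) (hA : A.Nonempty) (hAB : A ⊆ B) (ha : a ∈ A) :
    ρ A a * ∑ b ∈ A, ρ B b = (∑ b ∈ A, ρ A b) * ρ B a := by
  rw [mul_sum, sum_mul]
  refine sum_congr rfl fun b hb => ?_
  rw [h3 A B hA (hA.mono hAB) a (mem_inter.2 ⟨ha, hAB ha⟩) b (mem_inter.2 ⟨hb, hAB hb⟩),
    mul_comm]

theorem eq_one_sub_defer_mul_div (h3 : A3 ρ) (hA : A.Nonempty) (hAB : A ⊆ B)
    (hB : ∑ b ∈ A, ρ B b ≠ 0) (ha : a ∈ A) :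
    ρ A a = (1 - defer ρ A) * (ρ B a / ∑ b ∈ A, ρ B b) := by
  rw [one_sub_defer, ← mul_div_assoc, eq_div_iff hB, h3.mul_sum_eq_sum_mul hA hAB ha]

end A3

theorem stmt2_general (hX : 1 < Fintype.card X) (ρ : Finset X → X → ℝ)
    (h2 : A2 ρ) (h3 : A3 ρ) :
    (∃ u : X → ℝ, (∀ a, 0 < u a) ∧
      ∀ A : Finset X, A.Nonempty → ∀ a ∈ A,
        ρ A a = (1 - defer ρ A) * (u a / ∑ b ∈ A, u b)) ∧
    ∀ z : X,
      (∀ a : X, 0 < ρ univ a / ρ univ z) ∧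
      (∀ A : Finset X, A.Nonempty → ∀ a ∈ A,
        ρ A a = (1 - defer ρ A) * ((ρ univ a / ρ univ z) / ∑ b ∈ A, ρ univ b / ρ univ z)) := by
  have hpos := h2.pos_univ hX
  have luce : ∀ A : Finset X, A.Nonempty → ∀ a ∈ A,
      ρ A a = (1 - defer ρ A) * (ρ univ a / ∑ b ∈ A, ρ univ b) := fun A hA a ha =>
    h3.eq_one_sub_defer_mul_div hA (subset_univ A) (sum_pos (fun b _ => hpos b) hA).ne' ha
  refine ⟨⟨(ρ univ ·), hpos, luce⟩, fun z => ⟨fun a => div_pos (hpos a) (hpos z), ?_⟩⟩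
  intro A hA a ha
  rw [← sum_div, div_div_div_cancel_right₀ (hpos z).ne']
  exact luce A hA a ha

/-- Under A2 and A3, `ρ` admits the conditional-Luce form, and one may take
`u(a) = ρ(a,X)/ρ(z,X)` for any fixed `z ∈ X`. -/
theorem stmt2 (hX : 1 < Fintype.card X) (ρ : Finset X → X → ℝ)
    (hρ : IsRNFC ρ) (h2 : A2 ρ) (h3 : A3 ρ) :
    (∃ u : X → ℝ, (∀ a, 0 < u a) ∧
      ∀ A : Finset X, A.Nonempty → ∀ a ∈ A,
        ρ A a = (1 - defer ρ A) * (u a / ∑ b ∈ A, u b)) ∧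
    ∀ z : X,
      (∀ a : X, 0 < ρ univ a / ρ univ z) ∧
      (∀ A : Finset X, A.Nonempty → ∀ a ∈ A,
        ρ A a = (1 - defer ρ A) * ((ρ univ a / ρ univ z) / ∑ b ∈ A, ρ univ b / ρ univ z)) :=
  stmt2_general hX ρ h2 h3
end

section
/- Every dual logit ρ with representation (v₁,v₂) is a decision-conflict logit with representation (u,D), where u(a) := v₁(a)·v₂(a) and D(A) := (∑_{b∈A} v₁(b))·(∑_{b∈A} v₂(b)) − ∑_{b∈A} v₁(b)·v₂(b); moreover this D is additive across pairs: for every menu A, D(A) = ∑_{{a,b}⊆A, a≠b} (v₁(a)v₂(b) + v₁(b)v₂(a)) = ∑_{{a,b}⊆A, a≠b} D({a,b}), where the sums run over unordered pairs of distinct elements of A. -/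
open Finset

variable {X : Type*} [Fintype X] [DecidableEq X]

/-!
With `u = v₁ v₂`, the denominators `∑ u + D(A)` of the decision-conflict form collapse to
`(∑_A v₁)(∑_A v₂)`, the product of the two dual-logit denominators. Expanding this product, `D(A)`
is the sum of `v₁(a) v₂(b)` over ordered pairs of distinct elements of `A`; grouping those pairs
by the two-element menu `{a, b}` they span gives additivity over binary submenus, and positivity
of the weights shows `D(A) = 0` exactly when `A` has no two distinct elements.
-/

namespace Finset

variable {α R : Type*}

theorem sum_mul_sum_sub_sum_mul_eq_sum_offDiag [DecidableEq α] [NonUnitalNonAssocRing R]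
    (f g : α → R) (A : Finset α) :
    (∑ b ∈ A, f b) * (∑ b ∈ A, g b) - ∑ b ∈ A, f b * g b
      = ∑ p ∈ A.offDiag, f p.1 * g p.2 := by
  rw [sum_mul_sum, ← sum_product', ← diag_union_offDiag,
    sum_union (disjoint_diag_offDiag A), sum_diag, add_sub_cancel_left]

theorem offDiag_eq_empty_iff_card_le_one (A : Finset α) : A.offDiag = ∅ ↔ A.card ≤ 1 := by
  rw [← coe_eq_empty, coe_offDiag, Set.offDiag_eq_empty, card_le_one_iff_subsingleton_coe]
  exact Set.subsingleton_coe _ |>.symm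

theorem filter_offDiag_pair_eq_offDiag [DecidableEq α] {A S : Finset α}
    (hS : S ∈ A.powersetCard 2) :
    A.offDiag.filter (fun p => ({p.1, p.2} : Finset α) = S) = S.offDiag := by
  obtain ⟨hSA, hcard⟩ := mem_powersetCard.mp hS
  ext ⟨a, b⟩
  simp only [mem_filter, mem_offDiag]
  constructor
  · rintro ⟨⟨-, -, hab⟩, rfl⟩
    simp [hab]
  · rintro ⟨ha, hb, hab⟩
    refine ⟨⟨hSA ha, hSA hb, hab⟩, eq_of_subset_of_card_le ?_ ?_⟩
    · simp [insert_subset_iff, ha, hb]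
    · rw [hcard, card_pair hab]

theorem sum_offDiag_eq_sum_powersetCard_two [DecidableEq α] [AddCommMonoid R]
    (h : α × α → R) (A : Finset α) :
    ∑ p ∈ A.offDiag, h p = ∑ S ∈ A.powersetCard 2, ∑ p ∈ S.offDiag, h p := by
  have hpair : ∀ p ∈ A.offDiag, ({p.1, p.2} : Finset α) ∈ A.powersetCard 2 := by
    intro p hp
    obtain ⟨h1, h2, hne⟩ := mem_offDiag.mp hp
    exact mem_powersetCard.mpr ⟨by simp [insert_subset_iff, h1, h2], card_pair hne⟩
  rw [← sum_fiberwise_of_maps_to hpair]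
  exact sum_congr rfl fun S hS => by rw [filter_offDiag_pair_eq_offDiag hS]

theorem sum_mul_sum_sub_sum_mul_eq_sum_powersetCard_two [DecidableEq α] [NonUnitalNonAssocRing R]
    (f g : α → R) (A : Finset α) :
    (∑ b ∈ A, f b) * (∑ b ∈ A, g b) - ∑ b ∈ A, f b * g b
      = ∑ S ∈ A.powersetCard 2, ((∑ b ∈ S, f b) * (∑ b ∈ S, g b) - ∑ b ∈ S, f b * g b) := by
  simp only [sum_mul_sum_sub_sum_mul_eq_sum_offDiag]
  exact sum_offDiag_eq_sum_powersetCard_two _ A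

theorem sum_eq_zero_iff_eq_empty_of_pos [AddCommMonoid R] [PartialOrder R] [IsOrderedAddMonoid R]
    {f : α → R} {A : Finset α} (hf : ∀ a ∈ A, 0 < f a) :
    ∑ a ∈ A, f a = 0 ↔ A = ∅ := by
  rw [sum_eq_zero_iff_of_nonneg fun a ha => (hf a ha).le, eq_empty_iff_forall_notMem]
  exact forall₂_congr fun a ha => iff_false_intro (hf a ha).ne'

end Finset

section DualLogit

variable {α : Type*}

def IsDualLogit (ρ : Finset α → α → ℝ) (v₁ v₂ : α → ℝ) : Prop :=
  (∀ a, 0 < v₁ a) ∧ (∀ a, 0 < v₂ a) ∧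
  ∀ A : Finset α, A.Nonempty → ∀ a ∈ A,
    ρ A a = (v₁ a / ∑ b ∈ A, v₁ b) * (v₂ a / ∑ b ∈ A, v₂ b)

theorem IsDualLogit.isDCL [DecidableEq α] {ρ : Finset α → α → ℝ} {v₁ v₂ : α → ℝ}
    (h : IsDualLogit ρ v₁ v₂) :
    IsDCL ρ (fun a => v₁ a * v₂ a)
      (fun A => (∑ b ∈ A, v₁ b) * (∑ b ∈ A, v₂ b) - ∑ b ∈ A, v₁ b * v₂ b) := by
  obtain ⟨h₁, h₂, hρ⟩ := h
  refine ⟨fun a => mul_pos (h₁ a) (h₂ a), fun A hA => ?_, fun A hA a ha => ?_⟩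
  · have hpos : ∀ p ∈ A.offDiag, 0 < v₁ p.1 * v₂ p.2 := fun p _ => mul_pos (h₁ p.1) (h₂ p.2)
    simp only [sum_mul_sum_sub_sum_mul_eq_sum_offDiag, sum_eq_zero_iff_eq_empty_of_pos hpos,
      offDiag_eq_empty_iff_card_le_one]
    refine ⟨sum_nonneg fun p hp => (hpos p hp).le, ?_⟩
    rw [Nat.le_one_iff_eq_zero_or_eq_one, or_iff_right (card_ne_zero.mpr hA)]
  · rw [hρ A hA a ha, div_mul_div_comm, add_sub_cancel]

end DualLogit

theorem stmt6_general (ρ : Finset X → X → ℝ)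
    (v₁ v₂ : X → ℝ) (h₁ : ∀ a, 0 < v₁ a) (h₂ : ∀ a, 0 < v₂ a)
    (hd : ∀ A : Finset X, A.Nonempty → ∀ a ∈ A,
      ρ A a = (v₁ a / ∑ b ∈ A, v₁ b) * (v₂ a / ∑ b ∈ A, v₂ b)) :
    IsDCL ρ (fun a => v₁ a * v₂ a)
      (fun A => (∑ b ∈ A, v₁ b) * (∑ b ∈ A, v₂ b) - ∑ b ∈ A, v₁ b * v₂ b) ∧
    ∀ A : Finset X,
      ((∑ b ∈ A, v₁ b) * (∑ b ∈ A, v₂ b) - ∑ b ∈ A, v₁ b * v₂ b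
        = ∑ p ∈ A.offDiag, v₁ p.1 * v₂ p.2) ∧
      ((∑ b ∈ A, v₁ b) * (∑ b ∈ A, v₂ b) - ∑ b ∈ A, v₁ b * v₂ b
        = ∑ S ∈ A.powersetCard 2,
            ((∑ b ∈ S, v₁ b) * (∑ b ∈ S, v₂ b) - ∑ b ∈ S, v₁ b * v₂ b)) :=
  ⟨IsDualLogit.isDCL ⟨h₁, h₂, hd⟩, fun A =>
    ⟨sum_mul_sum_sub_sum_mul_eq_sum_offDiag v₁ v₂ A,
      sum_mul_sum_sub_sum_mul_eq_sum_powersetCard_two v₁ v₂ A⟩⟩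

/-- Every dual logit is a decision-conflict logit with `u(a) = v₁(a)·v₂(a)` and
`D(A) = (∑_{b∈A} v₁(b))·(∑_{b∈A} v₂(b)) − ∑_{b∈A} v₁(b)·v₂(b)`; moreover this `D` equals
the sum over (un)ordered pairs of distinct elements of `A` of the cross terms
`v₁(a)v₂(b) + v₁(b)v₂(a)`, i.e. it is additive across binary submenus. -/
theorem stmt6 (ρ : Finset X → X → ℝ) (hρ : IsRNFC ρ)
    (v₁ v₂ : X → ℝ) (h₁ : ∀ a, 0 < v₁ a) (h₂ : ∀ a, 0 < v₂ a)
    (hd : ∀ A : Finset X, A.Nonempty → ∀ a ∈ A,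
      ρ A a = (v₁ a / ∑ b ∈ A, v₁ b) * (v₂ a / ∑ b ∈ A, v₂ b)) :
    IsDCL ρ (fun a => v₁ a * v₂ a)
      (fun A => (∑ b ∈ A, v₁ b) * (∑ b ∈ A, v₂ b) - ∑ b ∈ A, v₁ b * v₂ b) ∧
    ∀ A : Finset X,
      ((∑ b ∈ A, v₁ b) * (∑ b ∈ A, v₂ b) - ∑ b ∈ A, v₁ b * v₂ b
        = ∑ p ∈ A.offDiag, v₁ p.1 * v₂ p.2) ∧
      ((∑ b ∈ A, v₁ b) * (∑ b ∈ A, v₂ b) - ∑ b ∈ A, v₁ b * v₂ b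
        = ∑ S ∈ A.powersetCard 2,
            ((∑ b ∈ S, v₁ b) * (∑ b ∈ S, v₂ b) - ∑ b ∈ S, v₁ b * v₂ b)) :=
  stmt6_general ρ v₁ v₂ h₁ h₂ hd
end

section
/- In a dual logit, the deferral probability at a binary menu is nondecreasing in one alternative's utility in one dimension if and only if that alternative's utility is weakly lower in the other dimension. Precisely: fix reals v₁a, v₁b, v₂a > 0 and define g : (0,∞) → ℝ by g(t) = 1 − (v₁a·v₂a + v₁b·t)/((v₁a + v₁b)·(v₂a + t)) (the deferral probability at {a,b} when v₁(a)=v₁a, v₁(b)=v₁b, v₂(a)=v₂a, v₂(b)=t). Then g is monotone nondecreasing on (0,∞) if and only if v₁a ≥ v₁b. -/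
/-! Up to the affine change `x ↦ 1 - x / (v₁a + v₁b)`, the deferral probability is
`(v₁a v₂a + v₁b t) / (v₂a + t) = v₁b + v₂a (v₁a - v₁b) / (v₂a + t)`, which is nonincreasing
in `t > 0` exactly when `v₁a - v₁b ≥ 0`. -/

open Set

lemma antitoneOn_div_add_iff {c d : ℝ} (hd : 0 ≤ d) :
    AntitoneOn (fun t => c / (d + t)) (Ioi 0) ↔ 0 ≤ c := by
  refine ⟨fun h => ?_, fun hc s hs t _ hst => ?_⟩
  · have h12 : c / (d + 2) ≤ c / (d + 1) :=
      h (by norm_num : (1 : ℝ) ∈ Ioi 0) (by norm_num : (2 : ℝ) ∈ Ioi 0) one_le_two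
    rw [div_le_div_iff₀ (by positivity) (by positivity)] at h12
    linarith
  · have hs' : (0 : ℝ) < s := hs
    exact div_le_div_of_nonneg_left hc (by positivity) (by linarith)

lemma antitoneOn_mobius_iff {p q d : ℝ} (hd : 0 ≤ d) :
    AntitoneOn (fun t => (p + q * t) / (d + t)) (Ioi 0) ↔ q * d ≤ p := by
  have hsplit : EqOn (fun t => q + (p - q * d) / (d + t)) (fun t => (p + q * t) / (d + t))
      (Ioi 0) := by
    intro t (ht : 0 < t)
    field_simp
    ring
  rw [← hsplit.congr_antitoneOn, ← sub_nonneg, ← antitoneOn_div_add_iff hd]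
  exact ⟨fun h s hs t ht hst => by simpa using h hs ht hst,
    fun h s hs t ht hst => by simpa using h hs ht hst⟩

/-- In a dual logit, the deferral probability at a binary menu `{a,b}` is nondecreasing
in `v₂(b)` iff `v₁(a) ≥ v₁(b)`. -/
theorem stmt7 (v₁a v₁b v₂a : ℝ) (h1 : 0 < v₁a) (h2 : 0 < v₁b) (h3 : 0 < v₂a) :
    (∀ s t : ℝ, 0 < s → s ≤ t →
      1 - (v₁a * v₂a + v₁b * s) / ((v₁a + v₁b) * (v₂a + s))
        ≤ 1 - (v₁a * v₂a + v₁b * t) / ((v₁a + v₁b) * (v₂a + t)))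
      ↔ v₁a ≥ v₁b := by
  have hC : 0 < v₁a + v₁b := add_pos h1 h2
  have hdeferral : ∀ t : ℝ, 1 - (v₁a * v₂a + v₁b * t) / ((v₁a + v₁b) * (v₂a + t))
      = 1 - (v₁a * v₂a + v₁b * t) / (v₂a + t) / (v₁a + v₁b) := by
    intro t
    rw [div_div, mul_comm (v₂a + t)]
  simp only [hdeferral, sub_le_sub_iff_left, div_le_div_iff_of_pos_right hC]
  rw [ge_iff_le, ← mul_le_mul_iff_left₀ h3, ← antitoneOn_mobius_iff h3.le]
  exact ⟨fun h s (hs : 0 < s) t _ hst => h s t hs hst,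
    fun h s t hs hst => h hs (lt_of_lt_of_le hs hst) hst⟩
end

section
/- Let X be a finite set, u : X → ℝ strictly positive, and f : ℝ → ℝ strictly decreasing. Define the binary relation ≻ on X by a ≻ b if and only if u(a) > max{u(b), f(|u(a) − u(b)|)}. Then ≻ is a strict partial order: it is irreflexive and transitive. -/
/-- The revealed-preference relation of a utility-difference decision-conflict logit:
`a ≻ b` iff `u(a) > max {u(b), f(|u(a) − u(b)|)}`. -/
def pref {X : Type*} (u : X → ℝ) (f : ℝ → ℝ) (a b : X) : Prop :=
  u a > max (u b) (f |u a - u b|)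

/-- The revealed-preference relation `≻` is a strict partial order: irreflexive and
transitive. -/
theorem stmt8 {X : Type*} [Fintype X] (u : X → ℝ) (hu : ∀ a, 0 < u a)
    (f : ℝ → ℝ) (hf : StrictAnti f) :
    (∀ a : X, ¬ pref u f a a) ∧
    (∀ a b c : X, pref u f a b → pref u f b c → pref u f a c) := by
  constructor
  · intro a h
    exact absurd (lt_of_le_of_lt (le_max_left _ _) h) (lt_irrefl _)
  · intro a b c hab hbc
    rw [pref, gt_iff_lt, max_lt_iff] at *
    obtain ⟨hab1, hab2⟩ := hab
    obtain ⟨hbc1, hbc2⟩ := hbc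
    have hac : u c < u a := hbc1.trans hab1
    refine ⟨hac, ?_⟩
    have h1 : |u a - u b| ≤ |u a - u c| := by
      rw [abs_of_pos (by linarith), abs_of_pos (by linarith)]
      linarith
    calc f |u a - u c| ≤ f |u a - u b| := hf.antitone h1
      _ < u a := hab2
end

section
/- A dual logit is unique up to a joint ratio-scale transformation: two pairs (v₁,v₂) and (v₁',v₂') of strictly positive functions on X are dual-logit representations of the same random non-forced choice model ρ if and only if either there exist α, β > 0 with v₁' = α·v₁ and v₂' = β·v₂, or there exist α, β > 0 with v₁' = α·v₂ and v₂' = β·v₁. -/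
/-!
On a binary menu `{a, b}` the dual logit picks `a` with probability
`v₁ a v₂ a / ((v₁ a + v₁ b)(v₂ a + v₂ b))`. Comparing two representations `(v₁, v₂)` and
`(w₁, w₂)` on binary menus shows that the products `v₁ v₂` and the pair masses
`(v₁ a + v₁ b)(v₂ a + v₂ b)` are all scaled by one constant `c > 0`. Expanding, this makes
`(v₁ b w₁ a - v₁ a w₁ b)(v₂ b w₁ a - v₂ a w₁ b)` vanish, so every pair of points has equal
`w₁ / v₁` or equal `w₁ / v₂`; one of these two ratios is then constant, and `w₂` is
determined by `w₁ w₂ = c v₁ v₂`.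
-/

open Finset

theorem forall_eq_or_forall_eq_of_forall_or {X α β : Type*} (F : X → α) (G : X → β)
    (h : ∀ a b, F a = F b ∨ G a = G b) :
    (∀ a b, F a = F b) ∨ ∀ a b, G a = G b := by
  refine or_iff_not_imp_left.2 fun hF => ?_
  simp only [not_forall] at hF
  obtain ⟨a, b, hab⟩ := hF
  have hG : ∀ c, G c = G a := fun c => by
    rcases h a c with hac | hac
    · rcases h b c with hbc | hbc
      · exact absurd (hac.trans hbc.symm) hab
      · rw [← hbc, (h a b).resolve_left hab]
    · exact hac.symm
  exact fun c d => (hG c).trans (hG d).symm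

theorem exists_pos_eq_mul_of_div_eq {X : Type*} {f g : X → ℝ}
    (hf : ∀ a, 0 < f a) (hg : ∀ a, 0 < g a) (h : ∀ a b, f a / g a = f b / g b) :
    ∃ α > 0, ∀ a, f a = α * g a := by
  rcases isEmpty_or_nonempty X with _ | ⟨⟨a₀⟩⟩
  · exact ⟨1, one_pos, isEmptyElim⟩
  refine ⟨f a₀ / g a₀, div_pos (hf a₀) (hg a₀), fun a => ?_⟩
  rw [← h a a₀, div_mul_cancel₀ _ (hg a).ne']

theorem exists_pos_pair_scale_of_mul_eq {X : Type*} {v₁ v₂ w₁ w₂ : X → ℝ} {c : ℝ}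
    (hv₁ : ∀ a, 0 < v₁ a) (hc : 0 < c)
    (hp : ∀ a, w₁ a * w₂ a = c * (v₁ a * v₂ a)) (h₁ : ∃ α > 0, ∀ a, w₁ a = α * v₁ a) :
    ∃ α > 0, ∃ β > 0, (∀ a, w₁ a = α * v₁ a) ∧ ∀ a, w₂ a = β * v₂ a := by
  obtain ⟨α, hα, h₁⟩ := h₁
  refine ⟨α, hα, c / α, div_pos hc hα, h₁, fun a => ?_⟩
  rw [div_mul_eq_mul_div, eq_div_iff hα.ne']
  refine mul_left_cancel₀ (hv₁ a).ne' ?_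
  linear_combination hp a - w₂ a * h₁ a

noncomputable def dualLogit {X : Type*} (v₁ v₂ : X → ℝ) (A : Finset X) (a : X) : ℝ :=
  (v₁ a / ∑ b ∈ A, v₁ b) * (v₂ a / ∑ b ∈ A, v₂ b)

namespace dualLogit

variable {X : Type*} {v₁ v₂ w₁ w₂ : X → ℝ}

theorem comm (A : Finset X) (a : X) : dualLogit v₁ v₂ A a = dualLogit v₂ v₁ A a :=
  mul_comm _ _

theorem const_mul {α β : ℝ} (hα : α ≠ 0) (hβ : β ≠ 0) (A : Finset X) (a : X) :
    dualLogit (fun x => α * v₁ x) (fun x => β * v₂ x) A a = dualLogit v₁ v₂ A a := by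
  simp only [dualLogit, ← mul_sum, mul_div_mul_left _ _ hα, mul_div_mul_left _ _ hβ]

theorem pair [DecidableEq X] {a b : X} (hab : a ≠ b) :
    dualLogit v₁ v₂ {a, b} a = v₁ a * v₂ a / ((v₁ a + v₁ b) * (v₂ a + v₂ b)) := by
  rw [dualLogit, sum_pair hab, sum_pair hab, div_mul_div_comm]

section Uniqueness

variable [DecidableEq X] (hv₁ : ∀ a, 0 < v₁ a) (hv₂ : ∀ a, 0 < v₂ a)
  (hw₁ : ∀ a, 0 < w₁ a) (hw₂ : ∀ a, 0 < w₂ a)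
  (hρ : ∀ a b, a ≠ b → dualLogit v₁ v₂ {a, b} a = dualLogit w₁ w₂ {a, b} a)
include hv₁ hv₂ hw₁ hw₂ hρ

theorem prod_div_prod_eq_of_pair {a b : X} (hab : a ≠ b) :
    w₁ a * w₂ a / (v₁ a * v₂ a) =
      (w₁ a + w₁ b) * (w₂ a + w₂ b) / ((v₁ a + v₁ b) * (v₂ a + v₂ b)) := by
  have hp : 0 < v₁ a * v₂ a := mul_pos (hv₁ a) (hv₂ a)
  have hD : 0 < (v₁ a + v₁ b) * (v₂ a + v₂ b) :=
    mul_pos (add_pos (hv₁ a) (hv₁ b)) (add_pos (hv₂ a) (hv₂ b))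
  have hD' : 0 < (w₁ a + w₁ b) * (w₂ a + w₂ b) :=
    mul_pos (add_pos (hw₁ a) (hw₁ b)) (add_pos (hw₂ a) (hw₂ b))
  have h := hρ a b hab
  rw [pair hab, pair hab, div_eq_div_iff hD.ne' hD'.ne'] at h
  rw [div_eq_div_iff hp.ne' hD.ne']
  linarith

theorem prod_div_prod_eq (a b : X) :
    w₁ a * w₂ a / (v₁ a * v₂ a) = w₁ b * w₂ b / (v₁ b * v₂ b) := by
  rcases eq_or_ne a b with rfl | hab
  · rfl
  rw [prod_div_prod_eq_of_pair hv₁ hv₂ hw₁ hw₂ hρ hab,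
    prod_div_prod_eq_of_pair hv₁ hv₂ hw₁ hw₂ hρ hab.symm,
    add_comm (v₁ b), add_comm (v₂ b), add_comm (w₁ b), add_comm (w₂ b)]

theorem exists_prod_eq_const_mul_prod :
    ∃ c > 0, ∀ a, w₁ a * w₂ a = c * (v₁ a * v₂ a) :=
  exists_pos_eq_mul_of_div_eq (fun a => mul_pos (hw₁ a) (hw₂ a))
    (fun a => mul_pos (hv₁ a) (hv₂ a)) (prod_div_prod_eq hv₁ hv₂ hw₁ hw₂ hρ)

theorem pair_sums_eq_const_mul {c : ℝ} (hp : ∀ a, w₁ a * w₂ a = c * (v₁ a * v₂ a))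
    {a b : X} (hab : a ≠ b) :
    (w₁ a + w₁ b) * (w₂ a + w₂ b) = c * ((v₁ a + v₁ b) * (v₂ a + v₂ b)) := by
  have h := prod_div_prod_eq_of_pair hv₁ hv₂ hw₁ hw₂ hρ hab
  rw [hp a, mul_div_cancel_right₀ _ (mul_pos (hv₁ a) (hv₂ a)).ne',
    eq_div_iff (mul_pos (add_pos (hv₁ a) (hv₁ b)) (add_pos (hv₂ a) (hv₂ b))).ne'] at h
  exact h.symm

theorem div_eq_div_or_div_eq (a b : X) :
    w₁ a / v₁ a = w₁ b / v₁ b ∨ w₁ a / v₂ a = w₁ b / v₂ b := by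
  obtain ⟨c, hc, hp⟩ := exists_prod_eq_const_mul_prod hv₁ hv₂ hw₁ hw₂ hρ
  rcases eq_or_ne a b with rfl | hab
  · exact Or.inl rfl
  have hD := pair_sums_eq_const_mul hv₁ hv₂ hw₁ hw₂ hρ hp hab
  -- by `hp` and `hD`, `c` times this product is the same product for `(w₁, w₂)`, which is `0`
  have h : c * ((v₁ b * w₁ a - v₁ a * w₁ b) * (v₂ b * w₁ a - v₂ a * w₁ b)) = 0 := by
    linear_combination (w₁ a * w₁ b) * hD - (w₁ a * w₁ b + w₁ a ^ 2) * hp b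
      - (w₁ a * w₁ b + w₁ b ^ 2) * hp a
  rw [div_eq_div_iff (hv₁ a).ne' (hv₁ b).ne', div_eq_div_iff (hv₂ a).ne' (hv₂ b).ne']
  rcases mul_eq_zero.1 ((mul_eq_zero.1 h).resolve_left hc.ne') with h | h
  · left; linear_combination h
  · right; linear_combination h

theorem eq_const_mul_or_eq_const_mul_swap :
    (∃ α > 0, ∃ β > 0, (∀ a, w₁ a = α * v₁ a) ∧ ∀ a, w₂ a = β * v₂ a) ∨
      ∃ α > 0, ∃ β > 0, (∀ a, w₁ a = α * v₂ a) ∧ ∀ a, w₂ a = β * v₁ a := by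
  obtain ⟨c, hc, hp⟩ := exists_prod_eq_const_mul_prod hv₁ hv₂ hw₁ hw₂ hρ
  rcases forall_eq_or_forall_eq_of_forall_or _ _ (div_eq_div_or_div_eq hv₁ hv₂ hw₁ hw₂ hρ)
    with h | h
  · exact Or.inl (exists_pos_pair_scale_of_mul_eq hv₁ hc hp (exists_pos_eq_mul_of_div_eq hw₁ hv₁ h))
  · have hp' : ∀ a, w₁ a * w₂ a = c * (v₂ a * v₁ a) := fun a => by rw [hp, mul_comm (v₁ a)]
    exact Or.inr <|
      exists_pos_pair_scale_of_mul_eq hv₂ hc hp' (exists_pos_eq_mul_of_div_eq hw₁ hv₂ h)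

end Uniqueness

end dualLogit

open dualLogit in
theorem stmt9_general {X : Type*} [DecidableEq X]
    (v₁ v₂ v₁' v₂' : X → ℝ)
    (h₁ : ∀ a, 0 < v₁ a) (h₂ : ∀ a, 0 < v₂ a)
    (h₁' : ∀ a, 0 < v₁' a) (h₂' : ∀ a, 0 < v₂' a) :
    (∀ A : Finset X, A.Nonempty → ∀ a ∈ A,
        (v₁ a / ∑ b ∈ A, v₁ b) * (v₂ a / ∑ b ∈ A, v₂ b)
          = (v₁' a / ∑ b ∈ A, v₁' b) * (v₂' a / ∑ b ∈ A, v₂' b))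
      ↔ ((∃ α > 0, ∃ β > 0, (∀ a, v₁' a = α * v₁ a) ∧ (∀ a, v₂' a = β * v₂ a)) ∨
         (∃ α > 0, ∃ β > 0, (∀ a, v₁' a = α * v₂ a) ∧ (∀ a, v₂' a = β * v₁ a))) := by
  constructor
  · exact fun h => eq_const_mul_or_eq_const_mul_swap h₁ h₂ h₁' h₂'
      fun a b _ => h {a, b} (insert_nonempty a {b}) a (mem_insert_self a {b})
  · rintro (⟨α, hα, β, hβ, hv₁', hv₂'⟩ | ⟨α, hα, β, hβ, hv₁', hv₂'⟩) A - a -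
    all_goals
      obtain rfl : v₁' = _ := funext hv₁'
      obtain rfl : v₂' = _ := funext hv₂'
    · exact (const_mul hα.ne' hβ.ne' A a).symm
    · exact (comm A a).trans (const_mul hα.ne' hβ.ne' A a).symm

/-- A dual logit is unique up to a joint ratio-scale transformation: two pairs of strictly
positive functions represent the same random non-forced choice model iff each function in
one pair is a positive multiple of a corresponding (possibly permuted) function in the
other pair. -/
theorem stmt9 {X : Type*} [Fintype X] [DecidableEq X] [Nontrivial X]
    (v₁ v₂ v₁' v₂' : X → ℝ)
    (h₁ : ∀ a, 0 < v₁ a) (h₂ : ∀ a, 0 < v₂ a)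
    (h₁' : ∀ a, 0 < v₁' a) (h₂' : ∀ a, 0 < v₂' a) :
    (∀ A : Finset X, A.Nonempty → ∀ a ∈ A,
        (v₁ a / ∑ b ∈ A, v₁ b) * (v₂ a / ∑ b ∈ A, v₂ b)
          = (v₁' a / ∑ b ∈ A, v₁' b) * (v₂' a / ∑ b ∈ A, v₂' b))
      ↔ ((∃ α > 0, ∃ β > 0, (∀ a, v₁' a = α * v₁ a) ∧ (∀ a, v₂' a = β * v₂ a)) ∨
         (∃ α > 0, ∃ β > 0, (∀ a, v₁' a = α * v₂ a) ∧ (∀ a, v₂' a = β * v₁ a))) :=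
  stmt9_general v₁ v₂ v₁' v₂' h₁ h₂ h₁' h₂'
end

section
/- (Duopoly equilibrium without decision conflict) Fix I > 0. For reals q, p with 0 ≤ q ≤ p ≤ I, define a firm's profit against the opponent strategy (I/3, I) by π(q,p) = ((q/p)/((q/p) + 1/3)) · (p − q), with the convention q/p = 0 when p = 0. Then π(q,p) ≤ I/3 for all such (q,p), and π(I/3, I) = I/3; that is, the symmetric profile in which both firms play (q,p) = (I/3, I) is a Nash equilibrium of the simultaneous price-quality game with logit demand, and each firm's equilibrium expected profit equals I/3. -/
/-!
Write `u = q / p` for the utility ratio. Then the profit is `p · u (1 - u) / (u + 1/3)`, and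
`u (1 - u) ≤ (u + 1/3) / 3` is just `(u - 1/3)² ≥ 0`; hence the profit is at most
`p / 3 ≤ I / 3`, with equality at `u = 1/3`, `p = I`.
-/

/-- Profit of a firm playing `(q, p)` under logit demand against an opponent playing
`(I/3, I)`, whose utility ratio is `1/3`. -/
noncomputable def logitProfit (q p : ℝ) : ℝ :=
  (q / p) / (q / p + 1 / 3) * (p - q)

lemma div_add_third_mul_one_sub_le {u : ℝ} (hu : 0 ≤ u) :
    u / (u + 1 / 3) * (1 - u) ≤ 1 / 3 := by
  have hden : 0 < u + 1 / 3 := by positivity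
  rw [div_mul_eq_mul_div, div_le_iff₀ hden]
  nlinarith [sq_nonneg (u - 1 / 3)]

lemma logitProfit_eq_mul (q p : ℝ) (hq : 0 ≤ q) (hqp : q ≤ p) :
    logitProfit q p = p * ((q / p) / (q / p + 1 / 3) * (1 - q / p)) := by
  have hmargin : p - q = p * (1 - q / p) := by
    rcases eq_or_ne p 0 with rfl | hp
    · simp [le_antisymm hqp hq]
    · field_simp
  rw [logitProfit, hmargin]
  ring

lemma logitProfit_le {q p I : ℝ} (hq : 0 ≤ q) (hqp : q ≤ p) (hpI : p ≤ I) :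
    logitProfit q p ≤ I / 3 := by
  have hp : 0 ≤ p := hq.trans hqp
  calc logitProfit q p = p * ((q / p) / (q / p + 1 / 3) * (1 - q / p)) :=
        logitProfit_eq_mul q p hq hqp
    _ ≤ p * (1 / 3) :=
        mul_le_mul_of_nonneg_left (div_add_third_mul_one_sub_le (div_nonneg hq hp)) hp
    _ ≤ I / 3 := by linarith

lemma logitProfit_third_self (I : ℝ) : logitProfit (I / 3) I = I / 3 := by
  rcases eq_or_ne I 0 with rfl | hI
  · simp [logitProfit]
  · have hratio : I / 3 / I = 1 / 3 := by field_simp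
    rw [logitProfit, hratio]
    ring

theorem stmt13_general (I : ℝ) :
    (∀ q p : ℝ, 0 ≤ q → q ≤ p → p ≤ I →
      (q / p) / (q / p + 1 / 3) * (p - q) ≤ I / 3) ∧
    ((I / 3) / I) / ((I / 3) / I + 1 / 3) * (I - I / 3) = I / 3 :=
  ⟨fun _ _ hq hqp hpI => logitProfit_le hq hqp hpI, logitProfit_third_self I⟩

/-- Duopoly equilibrium without decision conflict: against an opponent playing
`(I/3, I)`, every feasible strategy `(q,p)` yields profit at most `I/3` under logit
demand, and `(I/3, I)` attains this bound, so the symmetric profile `(I/3, I)` is a Nash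
equilibrium with equilibrium expected profit `I/3` for each firm. -/
theorem stmt13 (I : ℝ) (hI : 0 < I) :
    (∀ q p : ℝ, 0 ≤ q → q ≤ p → p ≤ I →
      (q / p) / (q / p + 1 / 3) * (p - q) ≤ I / 3) ∧
    ((I / 3) / I) / ((I / 3) / I + 1 / 3) * (I - I / 3) = I / 3 :=
  stmt13_general I
end

section
/- (Duopoly equilibrium with decision conflict) Fix I > 0. For reals q, p with 0 ≤ q ≤ p ≤ I, define a firm's profit against the opponent strategy (I/2, I) by π(q,p) = ((q/p)/((q/p) + 1/2))² · (p − q), with the convention q/p = 0 when p = 0. Then π(q,p) ≤ I/8 for all such (q,p), and π(I/2, I) = I/8; that is, the symmetric profile in which both firms play (q,p) = (I/2, I) is a Nash equilibrium of the simultaneous price-quality game with quadratic-logit demand, and each firm's equilibrium expected profit equals I/8. -/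
/-!
Against an opponent of utility `1/2` the quadratic-logit share of `(q, p)` is `(2q / (2q + p))²`,
and the identity `p (2q + p)² - 32 q² (p - q) = (p - 2q)² (8q + p)` shows that the profit is at
most `p / 8`, with equality exactly at `q = p / 2`. Hence the best reply charges the full income
`p = I` at quality `I / 2`, earning `I / 8`.
-/

/-- Profit of a firm playing `(q, p)` against an opponent whose product has utility `1 / 2`,
such as `(I / 2, I)`. -/
noncomputable def profitAgainstHalf (q p : ℝ) : ℝ := ((q / p) / (q / p + 1 / 2)) ^ 2 * (p - q)

lemma div_div_add_half {q p : ℝ} (hp : 0 < p) (hq : 0 ≤ q) :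
    (q / p) / (q / p + 1 / 2) = 2 * q / (2 * q + p) := by
  have : 0 < q / p + 1 / 2 := by positivity
  field_simp

lemma sq_two_mul_div_mul_sub_le {q p : ℝ} (hp : 0 < p) (hq : 0 ≤ q) :
    (2 * q / (2 * q + p)) ^ 2 * (p - q) ≤ p / 8 := by
  have key : p * (2 * q + p) ^ 2 - 32 * q ^ 2 * (p - q) = (p - 2 * q) ^ 2 * (8 * q + p) := by
    ring
  rw [div_pow, div_mul_eq_mul_div, div_le_div_iff₀ (by positivity) (by norm_num)]
  linarith [key, mul_nonneg (sq_nonneg (p - 2 * q)) (show 0 ≤ 8 * q + p by linarith)]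

lemma profitAgainstHalf_le {q p : ℝ} (hq : 0 ≤ q) (hp : 0 ≤ p) :
    profitAgainstHalf q p ≤ p / 8 := by
  rcases hp.eq_or_lt with rfl | hp
  · simp [profitAgainstHalf]
  · rw [profitAgainstHalf, div_div_add_half hp hq]
    exact sq_two_mul_div_mul_sub_le hp hq

lemma profitAgainstHalf_half (p : ℝ) : profitAgainstHalf (p / 2) p = p / 8 := by
  rcases eq_or_ne p 0 with rfl | hp
  · simp [profitAgainstHalf]
  · have half : p / 2 / p = 1 / 2 := by field_simp
    rw [profitAgainstHalf, half]
    ring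

theorem stmt14_general (I : ℝ) :
    (∀ q p : ℝ, 0 ≤ q → q ≤ p → p ≤ I →
      ((q / p) / (q / p + 1 / 2)) ^ 2 * (p - q) ≤ I / 8) ∧
    (((I / 2) / I) / ((I / 2) / I + 1 / 2)) ^ 2 * (I - I / 2) = I / 8 := by
  refine ⟨fun q p hq hqp hpI => ?_, profitAgainstHalf_half I⟩
  calc profitAgainstHalf q p ≤ p / 8 := profitAgainstHalf_le hq (hq.trans hqp)
    _ ≤ I / 8 := by linarith

/-- Duopoly equilibrium with decision conflict: against an opponent playing `(I/2, I)`,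
every feasible strategy `(q,p)` yields profit at most `I/8` under quadratic-logit demand,
and `(I/2, I)` attains this bound, so the symmetric profile `(I/2, I)` is a Nash
equilibrium with equilibrium expected profit `I/8` for each firm. -/
theorem stmt14 (I : ℝ) (hI : 0 < I) :
    (∀ q p : ℝ, 0 ≤ q → q ≤ p → p ≤ I →
      ((q / p) / (q / p + 1 / 2)) ^ 2 * (p - q) ≤ I / 8) ∧
    (((I / 2) / I) / ((I / 2) / I + 1 / 2)) ^ 2 * (I - I / 2) = I / 8 :=
  stmt14_general I
end

section
/- A reciprocal-differences model is unique up to a positive linear-quadratic transformation: if (u,λ) and (u',λ') are reciprocal-differences representations of the same random non-forced choice model ρ on X (with |X| ≥ 2), then they coincide as representations if and only if there exists α > 0 such that u' = α·u and λ' = α²·λ. -/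
/-!
Writing `D(a,b) = u a + u b + λ / |u a - u b|`, which is symmetric in `a` and `b`, the choice
probabilities of `a` and `b` from `{a, b}` are `u a / D(a,b)` and `u b / D(a,b)`. Their ratio
`u a / u b` does not involve `λ`, so two representations of the same model have proportional
utilities, `u' = α u`. Scaling `u` by `α` scales `D` by `α` once `λ` is replaced by `λ / α²`,
and since `|u a - u b| ≠ 0`, the probability `u a / D(a,b)` determines `λ`; hence `λ' = α² λ`.
-/

namespace ReciprocalDifferences

variable {X : Type*} {u : X → ℝ} {l : ℝ} {a b : X}

noncomputable def denom (u : X → ℝ) (l : ℝ) (a b : X) : ℝ :=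
  u a + u b + l / |u a - u b|

noncomputable def choiceProb (u : X → ℝ) (l : ℝ) (a b : X) : ℝ :=
  u a / denom u l a b

theorem denom_comm (u : X → ℝ) (l : ℝ) (a b : X) : denom u l a b = denom u l b a := by
  rw [denom, denom, abs_sub_comm, add_comm (u a)]

theorem denom_pos (hu : ∀ a, 0 < u a) (hl : 0 ≤ l) (a b : X) : 0 < denom u l a b := by
  have := hu a
  have := hu b
  unfold denom
  positivity

theorem denom_const_mul {α : ℝ} (hα : 0 < α) (u : X → ℝ) (l : ℝ) (a b : X) :
    denom (fun x => α * u x) l a b = α * denom u (l / α ^ 2) a b := by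
  have habs : |α * u a - α * u b| = α * |u a - u b| := by
    rw [← mul_sub, abs_mul, abs_of_pos hα]
  simp only [denom, habs]
  field_simp

theorem choiceProb_const_mul {α : ℝ} (hα : 0 < α) (u : X → ℝ) (l : ℝ) (a b : X) :
    choiceProb (fun x => α * u x) l a b = choiceProb u (l / α ^ 2) a b := by
  rw [choiceProb, denom_const_mul hα, mul_div_mul_left _ _ hα.ne', choiceProb]

theorem choiceProb_inj (ha : u a ≠ 0) (hab : u a ≠ u b) {m : ℝ} :
    choiceProb u l a b = choiceProb u m a b ↔ l = m := by
  have hδ : |u a - u b| ≠ 0 := abs_ne_zero.2 (sub_ne_zero.2 hab)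
  rw [choiceProb, choiceProb, div_eq_mul_inv, div_eq_mul_inv, mul_right_inj' ha, inv_inj,
    denom, denom, add_right_inj, div_left_inj' hδ]

variable {u' : X → ℝ} {l' : ℝ}

theorem mul_eq_mul_of_choiceProb_eq (hu : ∀ a, 0 < u a) (hu' : ∀ a, 0 < u' a)
    (hl : 0 ≤ l) (hl' : 0 ≤ l') (hab : choiceProb u l a b = choiceProb u' l' a b)
    (hba : choiceProb u l b a = choiceProb u' l' b a) : u' a * u b = u a * u' b := by
  have hD := denom_pos hu hl a b
  have hD' := denom_pos hu' hl' a b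
  rw [choiceProb, choiceProb, div_eq_div_iff hD.ne' hD'.ne'] at hab
  rw [choiceProb, choiceProb, denom_comm u, denom_comm u',
    div_eq_div_iff hD.ne' hD'.ne'] at hba
  apply mul_right_cancel₀ hD.ne'
  linear_combination (-u b) * hab + u a * hba

theorem exists_eq_const_mul_of_choiceProb_eq [Nonempty X] (hu : ∀ a, 0 < u a)
    (hu' : ∀ a, 0 < u' a) (hl : 0 ≤ l) (hl' : 0 ≤ l')
    (h : ∀ a b, a ≠ b → choiceProb u l a b = choiceProb u' l' a b) :
    ∃ α > 0, ∀ a, u' a = α * u a := by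
  obtain ⟨a₀⟩ := ‹Nonempty X›
  refine ⟨u' a₀ / u a₀, div_pos (hu' a₀) (hu a₀), fun a => ?_⟩
  rw [div_mul_eq_mul_div, eq_div_iff (hu a₀).ne', mul_comm (u' a₀)]
  rcases eq_or_ne a a₀ with rfl | ha
  · ring
  · exact mul_eq_mul_of_choiceProb_eq hu hu' hl hl' (h a a₀ ha) (h a₀ a ha.symm)

end ReciprocalDifferences

open ReciprocalDifferences in
theorem stmt17_general {X : Type*} [Fintype X] (hX : 1 < Fintype.card X)
    (u u' : X → ℝ) (l l' : ℝ)
    (hu : ∀ a, 0 < u a) (hu' : ∀ a, 0 < u' a)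
    (hui : Function.Injective u)
    (hl : 0 < l) (hl' : 0 < l') :
    (∀ a b : X, a ≠ b →
        u a / (u a + u b + l / |u a - u b|)
          = u' a / (u' a + u' b + l' / |u' a - u' b|))
      ↔ ∃ α > 0, (∀ a, u' a = α * u a) ∧ l' = α ^ 2 * l := by
  constructor
  · intro h
    obtain ⟨a₀, b₀, hab⟩ := Fintype.exists_pair_of_one_lt_card hX
    have : Nonempty X := ⟨a₀⟩
    obtain ⟨α, hα, hscale⟩ := exists_eq_const_mul_of_choiceProb_eq hu hu' hl.le hl'.le h
    refine ⟨α, hα, hscale, ?_⟩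
    obtain rfl : u' = fun a => α * u a := funext hscale
    have hprob : choiceProb u l a₀ b₀ = choiceProb u (l' / α ^ 2) a₀ b₀ := by
      rw [← choiceProb_const_mul hα]
      exact h a₀ b₀ hab
    rw [choiceProb_inj (hu a₀).ne' (hui.ne hab), eq_div_iff (by positivity)] at hprob
    linear_combination -hprob
  · rintro ⟨α, hα, hscale, rfl⟩ a b _
    obtain rfl : u' = fun a => α * u a := funext hscale
    change choiceProb u l a b = choiceProb (fun a => α * u a) (α ^ 2 * l) a b
    rw [choiceProb_const_mul hα, mul_div_cancel_left₀ _ (by positivity)]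

/-- A reciprocal-differences model is unique up to a positive linear-quadratic
transformation: `(u,λ)` and `(u',λ')` represent the same random non-forced choice model
iff `u' = α·u` and `λ' = α²·λ` for some `α > 0`. -/
theorem stmt17 {X : Type*} [Fintype X] [DecidableEq X] (hX : 1 < Fintype.card X)
    (u u' : X → ℝ) (l l' : ℝ)
    (hu : ∀ a, 0 < u a) (hu' : ∀ a, 0 < u' a)
    (hui : Function.Injective u) (hui' : Function.Injective u')
    (hl : 0 < l) (hl' : 0 < l') :
    (∀ a b : X, a ≠ b →
        u a / (u a + u b + l / |u a - u b|)
          = u' a / (u' a + u' b + l' / |u' a - u' b|))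
      ↔ ∃ α > 0, (∀ a, u' a = α * u a) ∧ l' = α ^ 2 * l :=
  stmt17_general hX u u' l l' hu hu' hui hl hl'
end

section
/- (Absolute and relative attractiveness effects) Let ρ be a reciprocal-differences model with representation (u,λ). For all a, b, c, d ∈ X with u(a) > u(b) and u(c) > u(d), one has ρ(o,{c,d}) > ρ(o,{a,b}) if and only if u(a)² − u(b)² > u(c)² − u(d)². In particular, ρ(o,{c,d}) > ρ(o,{a,b}) holds whenever either (i) u(a) − u(b) > u(c) − u(d) and u(a) + u(b) = u(c) + u(d), or (ii) u(a) + u(b) > u(c) + u(d) and u(a) − u(b) = u(c) − u(d). -/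
/-!
On a binary menu `{a, b}` with `u a > u b`, clearing the reciprocal difference from the
denominators shows that the deferral probability is `λ / (λ + (u(a)² − u(b)²))`. It is therefore
a strictly decreasing function of `u(a)² − u(b)² = (u(a) + u(b)) (u(a) − u(b))`, which increases
both with the difference and with the sum of the two utilities.
-/

open Finset

variable {X : Type*} [Fintype X] [DecidableEq X]

lemma sq_sub_sq_pos {x y : ℝ} (hxy : y < x) (hsum : 0 < x + y) : 0 < x ^ 2 - y ^ 2 := by
  rw [sq_sub_sq]
  exact mul_pos hsum (sub_pos.mpr hxy)

lemma one_sub_reciprocal_differences {x y l : ℝ} (hxy : y < x) (hsum : 0 < x + y) (hl : 0 ≤ l) :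
    1 - (x / (x + y + l / |x - y|) + y / (x + y + l / |x - y|)) = l / (l + (x ^ 2 - y ^ 2)) := by
  have hdiff : 0 < x - y := sub_pos.mpr hxy
  have hden : 0 < l + (x ^ 2 - y ^ 2) := add_pos_of_nonneg_of_pos hl (sq_sub_sq_pos hxy hsum)
  rw [abs_of_pos hdiff]
  field_simp
  ring

omit [Fintype X] in
lemma defer_pair_of_reciprocal_differences {ρ : Finset X → X → ℝ} {u : X → ℝ} {l : ℝ}
    (hl : 0 ≤ l) {a b : X}
    (hρa : ρ {a, b} a = u a / (u a + u b + l / |u a - u b|))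
    (hρb : ρ {a, b} b = u b / (u a + u b + l / |u a - u b|))
    (hab : u b < u a) (hsum : 0 < u a + u b) :
    defer ρ {a, b} = l / (l + (u a ^ 2 - u b ^ 2)) := by
  have hne : a ≠ b := fun e => hab.ne (congrArg u e.symm)
  rw [defer, sum_pair hne, hρa, hρb]
  exact one_sub_reciprocal_differences hab hsum hl

lemma div_add_lt_div_add_iff {l p q : ℝ} (hl : 0 < l) (hp : 0 ≤ p) (hq : 0 ≤ q) :
    l / (l + p) < l / (l + q) ↔ q < p := by
  rw [div_lt_div_iff_of_pos_left hl (by positivity) (by positivity), add_lt_add_iff_left]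

theorem stmt19_general (ρ : Finset X → X → ℝ)
    (u : X → ℝ) (l : ℝ) (hu : ∀ a, 0 < u a) (hl : 0 < l)
    (h : ∀ a b : X, a ≠ b →
      ρ {a, b} a = u a / (u a + u b + l / |u a - u b|) ∧
      ρ {a, b} b = u b / (u a + u b + l / |u a - u b|)) :
    ∀ a b c d : X, u a > u b → u c > u d →
      (defer ρ {a, b} < defer ρ {c, d} ↔ u c ^ 2 - u d ^ 2 < u a ^ 2 - u b ^ 2) ∧
      ((u c - u d < u a - u b ∧ u a + u b = u c + u d) → defer ρ {a, b} < defer ρ {c, d}) ∧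
      ((u c + u d < u a + u b ∧ u a - u b = u c - u d) → defer ρ {a, b} < defer ρ {c, d}) := by
  intro a b c d hab hcd
  have hsum : ∀ x y : X, 0 < u x + u y := fun x y => add_pos (hu x) (hu y)
  have hdefer : ∀ x y : X, u y < u x → defer ρ {x, y} = l / (l + (u x ^ 2 - u y ^ 2)) :=
    fun x y hxy =>
      have hρ := h x y fun e => hxy.ne (congrArg u e.symm)
      defer_pair_of_reciprocal_differences hl.le hρ.1 hρ.2 hxy (hsum x y)
  have hiff : defer ρ {a, b} < defer ρ {c, d} ↔ u c ^ 2 - u d ^ 2 < u a ^ 2 - u b ^ 2 := by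
    rw [hdefer a b hab, hdefer c d hcd]
    exact div_add_lt_div_add_iff hl (sq_sub_sq_pos hab (hsum a b)).le
      (sq_sub_sq_pos hcd (hsum c d)).le
  refine ⟨hiff, ?_, ?_⟩
  · rintro ⟨hdiff, hsum_eq⟩
    rw [hiff, sq_sub_sq, sq_sub_sq, hsum_eq]
    exact mul_lt_mul_of_pos_left hdiff (hsum c d)
  · rintro ⟨hsum_lt, hdiff_eq⟩
    rw [hiff, sq_sub_sq, sq_sub_sq, hdiff_eq]
    exact mul_lt_mul_of_pos_right hsum_lt (sub_pos.mpr hcd)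

/-- Absolute and relative attractiveness effects in the reciprocal-differences model. -/
theorem stmt19 (ρ : Finset X → X → ℝ)
    (u : X → ℝ) (l : ℝ) (hu : ∀ a, 0 < u a) (hui : Function.Injective u) (hl : 0 < l)
    (h : ∀ a b : X, a ≠ b →
      ρ {a, b} a = u a / (u a + u b + l / |u a - u b|) ∧
      ρ {a, b} b = u b / (u a + u b + l / |u a - u b|)) :
    ∀ a b c d : X, u a > u b → u c > u d →
      (defer ρ {a, b} < defer ρ {c, d} ↔ u c ^ 2 - u d ^ 2 < u a ^ 2 - u b ^ 2) ∧
      ((u c - u d < u a - u b ∧ u a + u b = u c + u d) → defer ρ {a, b} < defer ρ {c, d}) ∧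
      ((u c + u d < u a + u b ∧ u a - u b = u c - u d) → defer ρ {a, b} < defer ρ {c, d}) :=
  stmt19_general ρ u l hu hl h
end
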